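/- For every n ≥ 2, the number of 231-avoiding permutations of length n with π(1) > π(2) and π(2) < π(3) equals C_{n−1}. -/

import Mathlib

/-!
Cut a 231-avoiding permutation of `Fin (m + 1)` at the position `p` of its maximum `m`. Every
entry left of `p` is smaller than every entry right of it (otherwise `a, m, b` is a 231), so by
counting the left block is an avoider with values `{0, …, p - 1}` and the right block one with
values `{p, …, m - 1}`; conversely any two avoiders glued this way avoid 231. This is Catalan's
recursion. An avoider has an initial valley iff `π 1 = 0`, since a minimum further right would
complete a 231 with the entries at positions `1` and `2`; deleting that entry is a bijection onto
the avoiders of length `n - 1`.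
-/

def Avoids231 {n : ℕ} (π : Fin n → Fin n) : Prop :=
  ¬ ∃ i j k : Fin n, i < j ∧ j < k ∧ π k < π i ∧ π i < π j

open Equiv Finset Function

lemma Function.Injective.of_comp_eq_comp {α β γ δ : Type*} {f : α → β} {F : γ → δ}
    {e : α → γ} {g : β → δ} (he : Injective e) (hF : Injective F)
    (h : ∀ i, F (e i) = g (f i)) : Injective f :=
  fun a b hab => he (hF (by rw [h, h, hab]))

def Is231Pattern {ι α : Type*} [LT ι] [LT α] (f : ι → α) (i j k : ι) : Prop :=
  i < j ∧ j < k ∧ f k < f i ∧ f i < f j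

lemma is231Pattern_comp_iff {ι κ α β : Type*} [LinearOrder ι] [LinearOrder κ] [LinearOrder α]
    [LinearOrder β] {f : ι → α} {F : κ → β} {e : ι → κ} {g : α → β}
    (he : StrictMono e) (hg : StrictMono g) (h : ∀ i, F (e i) = g (f i)) {i j k : ι} :
    Is231Pattern F (e i) (e j) (e k) ↔ Is231Pattern f i j k := by
  simp only [Is231Pattern, h, he.lt_iff_lt, hg.lt_iff_lt]

lemma Avoids231.of_comp_eq_comp {a b : ℕ} {f : Fin a → Fin a} {F : Fin b → Fin b}
    {e g : Fin a → Fin b} (he : StrictMono e) (hg : StrictMono g) (h : ∀ i, F (e i) = g (f i))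
    (hF : Avoids231 F) : Avoids231 f :=
  fun ⟨i, j, k, hijk⟩ => hF ⟨e i, e j, e k, (is231Pattern_comp_iff he hg h).2 hijk⟩

abbrev Av231 (n : ℕ) := {π : Perm (Fin n) // Avoids231 π}

namespace Av231

lemma val_apply_lt_of_ne {m : ℕ} {π : Perm (Fin (m + 1))} {p k : Fin (m + 1)}
    (hp : π p = Fin.last m) (hk : k ≠ p) : (π k : ℕ) < m :=
  Fin.val_lt_last (hp ▸ π.injective.ne hk)

section SplitAtMax

variable {m : ℕ} {π : Perm (Fin (m + 1))} {p : Fin (m + 1)}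
  (hπ : Avoids231 π) (hp : π p = Fin.last m)
include hπ hp

lemma apply_lt_apply_of_lt_of_lt {i k : Fin (m + 1)} (hi : i < p) (hk : p < k) : π i < π k := by
  by_contra! hki
  have hne : π k ≠ π i := π.injective.ne (hi.trans hk).ne'
  have hip : π i < π p := hp ▸ (Fin.le_last _).lt_of_ne (hp ▸ π.injective.ne hi.ne)
  exact hπ ⟨i, p, k, hi, hk, hki.lt_of_ne hne, hip⟩

lemma val_apply_lt {i : Fin (m + 1)} (hi : i < p) : (π i : ℕ) < p := by
  have hmaps : Set.MapsTo π.symm (Iic (π i)) (Iio p) := by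
    intro v hv
    simp only [coe_Iic, coe_Iio, Set.mem_Iic, Set.mem_Iio] at hv ⊢
    by_contra! hpv
    rcases hpv.eq_or_lt with hpv | hpv
    · have : π i = π p := le_antisymm (hp ▸ Fin.le_last _) (by rwa [hpv, apply_symm_apply])
      exact hi.ne (π.injective this)
    · exact hv.not_gt (by simpa using apply_lt_apply_of_lt_of_lt hπ hp hi hpv)
  simpa using card_le_card_of_injOn _ hmaps π.symm.injective.injOn

lemma le_val_apply {k : Fin (m + 1)} (hk : p < k) : (p : ℕ) ≤ π k := by
  have hmaps : Set.MapsTo π (Iio p) (Iio (π k)) := fun i hi => by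
    simpa using apply_lt_apply_of_lt_of_lt hπ hp (by simpa using hi) hk
  simpa using card_le_card_of_injOn _ hmaps π.injective.injOn

end SplitAtMax

section Pieces

variable {m : ℕ} (p : Fin (m + 1))

def leftEmb : Fin p → Fin (m + 1) := Fin.castLE p.isLt.le

def rightPos (j : Fin (m - p)) : Fin (m + 1) := ⟨p + 1 + j, by omega⟩

def rightVal (j : Fin (m - p)) : Fin (m + 1) := ⟨p + j, by omega⟩

lemma strictMono_leftEmb : StrictMono (leftEmb p) := Fin.strictMono_castLE _

lemma strictMono_rightPos : StrictMono (rightPos p) := fun _ _ h => by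
  simp only [rightPos, Fin.mk_lt_mk]; omega

lemma strictMono_rightVal : StrictMono (rightVal p) := fun _ _ h => by
  simp only [rightVal, Fin.mk_lt_mk]; omega

variable {p}

@[simp] lemma val_leftEmb (a : Fin p) : (leftEmb p a : ℕ) = a := rfl

@[simp] lemma val_rightPos (j : Fin (m - p)) : (rightPos p j : ℕ) = p + 1 + j := rfl

@[simp] lemma val_rightVal (j : Fin (m - p)) : (rightVal p j : ℕ) = p + j := rfl

lemma lt_rightPos (j : Fin (m - p)) : p < rightPos p j := by
  simp [Fin.lt_def]; omega

lemma exists_leftEmb_eq {i : Fin (m + 1)} (hi : (i : ℕ) < p) : ∃ a, leftEmb p a = i :=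
  ⟨⟨i, hi⟩, rfl⟩

lemma exists_rightPos_eq {i : Fin (m + 1)} (hi : p < i) : ∃ j, rightPos p j = i :=
  ⟨⟨i - (p + 1), by omega⟩, Fin.ext (by simp only [val_rightPos]; omega)⟩

lemma exists_rightVal_eq {v : Fin (m + 1)} (h₁ : (p : ℕ) ≤ v) (h₂ : (v : ℕ) < m) :
    ∃ j, rightVal p j = v :=
  ⟨⟨v - p, by omega⟩, Fin.ext (by simp only [val_rightVal]; omega)⟩

end Pieces

section Glue

variable {m : ℕ} (p : Fin (m + 1)) (σ : Fin p → Fin p) (τ : Fin (m - p) → Fin (m - p))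

def glue (i : Fin (m + 1)) : Fin (m + 1) :=
  if h : (i : ℕ) < p then leftEmb p (σ ⟨i, h⟩)
  else if h' : (i : ℕ) = p then Fin.last m
  else rightVal p (τ ⟨i - (p + 1), by omega⟩)

@[simp] lemma glue_leftEmb (a : Fin p) : glue p σ τ (leftEmb p a) = leftEmb p (σ a) := by
  simp [glue]

@[simp] lemma glue_self : glue p σ τ p = Fin.last m := by
  simp [glue]

@[simp] lemma glue_rightPos (j : Fin (m - p)) :
    glue p σ τ (rightPos p j) = rightVal p (τ j) := by
  simp [glue, show ¬ (p : ℕ) + 1 + j < p by omega, show (p : ℕ) + 1 + j ≠ p by omega]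

lemma glue_surjective (hσ : Surjective σ) (hτ : Surjective τ) : Surjective (glue p σ τ) := by
  intro v
  by_cases hv : (v : ℕ) < p
  · obtain ⟨a, rfl⟩ := exists_leftEmb_eq hv
    obtain ⟨a, rfl⟩ := hσ a
    exact ⟨leftEmb p a, by simp⟩
  by_cases hlast : v = Fin.last m
  · exact ⟨p, by simp [hlast]⟩
  obtain ⟨j, rfl⟩ := exists_rightVal_eq (not_lt.1 hv) (Fin.val_lt_last hlast)
  obtain ⟨j, rfl⟩ := hτ j
  exact ⟨rightPos p j, by simp⟩

lemma glue_avoids231 (hσ : Avoids231 σ) (hτ : Avoids231 τ) : Avoids231 (glue p σ τ) := by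
  rintro ⟨i, j, k, hij, hjk, hki, hij'⟩
  rcases lt_trichotomy i p with hi | rfl | hi
  · have hk : (k : ℕ) < p := by
      rcases lt_trichotomy k p with hk | rfl | hk
      · exact hk
      · exact absurd hki (by simpa using Fin.le_last _)
      · obtain ⟨a, rfl⟩ := exists_leftEmb_eq hi
        obtain ⟨c, rfl⟩ := exists_rightPos_eq hk
        simp only [glue_leftEmb, glue_rightPos, Fin.lt_def, val_leftEmb, val_rightVal] at hki
        omega
    obtain ⟨a, rfl⟩ := exists_leftEmb_eq hi
    obtain ⟨b, rfl⟩ := exists_leftEmb_eq (hjk.trans (Fin.lt_def.2 hk))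
    obtain ⟨c, rfl⟩ := exists_leftEmb_eq hk
    exact hσ ⟨a, b, c, (is231Pattern_comp_iff (strictMono_leftEmb p) (strictMono_leftEmb p)
      (glue_leftEmb p σ τ)).1 ⟨hij, hjk, hki, hij'⟩⟩
  · exact absurd hij' (by simpa using Fin.le_last _)
  · obtain ⟨a, rfl⟩ := exists_rightPos_eq hi
    obtain ⟨b, rfl⟩ := exists_rightPos_eq (hi.trans hij)
    obtain ⟨c, rfl⟩ := exists_rightPos_eq (hi.trans (hij.trans hjk))
    exact hτ ⟨a, b, c, (is231Pattern_comp_iff (strictMono_rightPos p) (strictMono_rightVal p)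
      (glue_rightPos p σ τ)).1 ⟨hij, hjk, hki, hij'⟩⟩

end Glue

section Parts

variable {m : ℕ} {π : Perm (Fin (m + 1))} {p : Fin (m + 1)}
  (hπ : Avoids231 π) (hp : π p = Fin.last m)

def leftPart (a : Fin p) : Fin p := ⟨π (leftEmb p a), val_apply_lt hπ hp a.isLt⟩

def rightPart (j : Fin (m - p)) : Fin (m - p) :=
  ⟨π (rightPos p j) - p, by
    have := val_apply_lt_of_ne hp (lt_rightPos j).ne'
    have := (rightPos p j).isLt
    simp only [val_rightPos] at this
    omega⟩

lemma leftEmb_leftPart (a : Fin p) : leftEmb p (leftPart hπ hp a) = π (leftEmb p a) := rfl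

include hπ in
lemma rightVal_rightPart (j : Fin (m - p)) :
    rightVal p (rightPart hp j) = π (rightPos p j) := by
  have := le_val_apply hπ hp (lt_rightPos j)
  ext
  simp only [rightPart, val_rightVal]
  omega

lemma leftPart_injective : Injective (leftPart hπ hp) :=
  Injective.of_comp_eq_comp (strictMono_leftEmb p).injective π.injective
    (fun a => (leftEmb_leftPart hπ hp a).symm)

include hπ in
lemma rightPart_injective : Injective (rightPart hp) :=
  Injective.of_comp_eq_comp (strictMono_rightPos p).injective π.injective
    (fun j => (rightVal_rightPart hπ hp j).symm)

lemma leftPart_avoids231 : Avoids231 (leftPart hπ hp) :=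
  hπ.of_comp_eq_comp (strictMono_leftEmb p) (strictMono_leftEmb p)
    (fun a => (leftEmb_leftPart hπ hp a).symm)

include hπ in
lemma rightPart_avoids231 : Avoids231 (rightPart hp) :=
  hπ.of_comp_eq_comp (strictMono_rightPos p) (strictMono_rightVal p)
    (fun j => (rightVal_rightPart hπ hp j).symm)

lemma glue_leftPart_rightPart (i : Fin (m + 1)) :
    glue p (leftPart hπ hp) (rightPart hp) i = π i := by
  rcases lt_trichotomy i p with hi | rfl | hi
  · obtain ⟨a, rfl⟩ := exists_leftEmb_eq hi
    rw [glue_leftEmb, leftEmb_leftPart]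
  · rw [glue_self, hp]
  · obtain ⟨j, rfl⟩ := exists_rightPos_eq hi
    rw [glue_rightPos, rightVal_rightPart hπ]

end Parts

noncomputable def maxAtEquiv {m : ℕ} (p : Fin (m + 1)) :
    {x : Av231 (m + 1) // x.1 p = Fin.last m} ≃ Av231 p × Av231 (m - p) where
  toFun := fun ⟨⟨_, hπ⟩, hp⟩ =>
    (⟨ofBijective _ (leftPart_injective hπ hp).bijective_of_finite, leftPart_avoids231 hπ hp⟩,
      ⟨ofBijective _ (rightPart_injective hπ hp).bijective_of_finite,
        rightPart_avoids231 hπ hp⟩)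
  invFun := fun ⟨⟨σ, hσ⟩, ⟨τ, hτ⟩⟩ =>
    ⟨⟨ofBijective _ (glue_surjective p σ τ σ.surjective τ.surjective).bijective_of_finite,
      glue_avoids231 p σ τ hσ hτ⟩, glue_self p σ τ⟩
  left_inv := fun ⟨⟨_, hπ⟩, hp⟩ =>
    Subtype.ext <| Subtype.ext <| Equiv.ext <| glue_leftPart_rightPart hπ hp
  right_inv := fun ⟨⟨σ, hσ⟩, ⟨τ, hτ⟩⟩ => by
    ext a
    · exact congrArg Fin.val ((strictMono_leftEmb p).injective (glue_leftEmb p σ τ a))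
    · exact congrArg Fin.val ((strictMono_rightVal p).injective
        ((rightVal_rightPart (glue_avoids231 p σ τ hσ hτ) (glue_self p σ τ) a).trans
          (glue_rightPos p σ τ a)))

lemma card_succ (m : ℕ) : Nat.card (Av231 (m + 1)) =
    ∑ p : Fin (m + 1), Nat.card (Av231 p) * Nat.card (Av231 (m - p)) := by
  rw [← Nat.card_congr (sigmaFiberEquiv fun x : Av231 (m + 1) => x.1.symm (Fin.last m)),
    Nat.card_sigma]
  refine sum_congr rfl fun p _ => ?_
  rw [← Nat.card_prod, ← Nat.card_congr (maxAtEquiv p)]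
  exact Nat.card_congr (subtypeEquivRight fun x => by rw [symm_apply_eq, eq_comm])

theorem card_eq_catalan (n : ℕ) : Nat.card (Av231 n) = catalan n := by
  induction n using Nat.strong_induction_on with
  | _ n ih =>
    rcases n with _ | m
    · have : Unique (Av231 0) :=
        ⟨⟨⟨1, fun ⟨i, _⟩ => i.elim0⟩⟩, fun _ => Subsingleton.elim _ _⟩
      rw [Nat.card_unique, catalan_zero]
    · rw [card_succ, catalan_succ]
      exact sum_congr rfl fun p _ => by rw [ih p (by omega), ih (m - p) (by omega)]

section Valley

variable {m : ℕ}

def insertMin (σ : Fin (m + 1) → Fin (m + 1)) : Fin (m + 2) → Fin (m + 2) :=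
  Fin.insertNth 1 0 (Fin.succ ∘ σ)

@[simp] lemma insertMin_one (σ : Fin (m + 1) → Fin (m + 1)) : insertMin σ 1 = 0 :=
  Fin.insertNth_apply_same _ _ _

@[simp] lemma insertMin_succAbove (σ : Fin (m + 1) → Fin (m + 1)) (i : Fin (m + 1)) :
    insertMin σ (Fin.succAbove 1 i) = (σ i).succ :=
  Fin.insertNth_apply_succAbove _ _ _ _

lemma insertMin_surjective {σ : Fin (m + 1) → Fin (m + 1)} (hσ : Surjective σ) :
    Surjective (insertMin σ) := by
  refine Fin.cases ⟨1, insertMin_one σ⟩ fun v => ?_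
  obtain ⟨i, rfl⟩ := hσ v
  exact ⟨Fin.succAbove 1 i, insertMin_succAbove σ i⟩

lemma insertMin_avoids231 {σ : Fin (m + 1) → Fin (m + 1)} (hσ : Avoids231 σ) :
    Avoids231 (insertMin σ) := by
  rintro ⟨i, j, k, hij, hjk, hki, hij'⟩
  have hi : i ≠ 1 := by rintro rfl; simp at hki
  have hj : j ≠ 1 := by rintro rfl; simp at hij'
  have hk : k ≠ 1 := by
    rintro rfl
    rw [Fin.lt_def, Fin.val_one] at hjk
    exact absurd (Fin.lt_def.1 hij) (by omega)
  obtain ⟨a, rfl⟩ := Fin.exists_succAbove_eq hi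
  obtain ⟨b, rfl⟩ := Fin.exists_succAbove_eq hj
  obtain ⟨c, rfl⟩ := Fin.exists_succAbove_eq hk
  exact hσ ⟨a, b, c, (is231Pattern_comp_iff (Fin.strictMono_succAbove 1) Fin.strictMono_succ
    (insertMin_succAbove σ)).1 ⟨hij, hjk, hki, hij'⟩⟩

variable {π : Perm (Fin (m + 2))} (h₁ : π 1 = 0)

def removeMin (i : Fin (m + 1)) : Fin (m + 1) :=
  (π (Fin.succAbove 1 i)).pred (h₁ ▸ π.injective.ne (Fin.succAbove_ne 1 i))

lemma succ_removeMin (i : Fin (m + 1)) : (removeMin h₁ i).succ = π (Fin.succAbove 1 i) :=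
  Fin.succ_pred _ _

lemma removeMin_injective : Injective (removeMin h₁) :=
  Injective.of_comp_eq_comp (Fin.strictMono_succAbove 1).injective π.injective
    (fun i => (succ_removeMin h₁ i).symm)

lemma removeMin_avoids231 (hπ : Avoids231 π) : Avoids231 (removeMin h₁) :=
  hπ.of_comp_eq_comp (Fin.strictMono_succAbove 1) Fin.strictMono_succ
    (fun i => (succ_removeMin h₁ i).symm)

lemma insertMin_removeMin : insertMin (removeMin h₁) = π :=
  Fin.insertNth_eq_iff.2 ⟨h₁.symm, funext fun i => succ_removeMin h₁ i⟩

end Valley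

noncomputable def minAtOneEquiv (m : ℕ) :
    {π : Perm (Fin (m + 2)) // Avoids231 π ∧ π 1 = 0} ≃ Av231 (m + 1) where
  toFun := fun ⟨_, hπ, h₁⟩ =>
    ⟨ofBijective _ (removeMin_injective h₁).bijective_of_finite, removeMin_avoids231 h₁ hπ⟩
  invFun := fun ⟨σ, hσ⟩ =>
    ⟨ofBijective _ (insertMin_surjective σ.surjective).bijective_of_finite,
      insertMin_avoids231 hσ, insertMin_one σ⟩
  left_inv := fun ⟨_, _, h₁⟩ =>
    Subtype.ext <| Equiv.ext <| congrFun (insertMin_removeMin h₁)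
  right_inv := fun ⟨σ, _⟩ => Subtype.ext <| Equiv.ext fun i =>
    Fin.succ_injective _ ((succ_removeMin (insertMin_one σ) i).trans (insertMin_succAbove σ i))

lemma initial_valley_iff {m : ℕ} {π : Perm (Fin (m + 3))} (hπ : Avoids231 π) :
    π 1 < π 0 ∧ π 1 < π 2 ↔ π 1 = 0 := by
  refine ⟨fun ⟨h₀, h₂⟩ => ?_, fun h₁ => ?_⟩
  · by_contra h₁
    obtain ⟨q, hq⟩ := π.surjective 0
    have h2q : 2 < q := by
      have h0 : q ≠ 0 := by rintro rfl; exact Fin.not_lt_zero _ (hq ▸ h₀)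
      have h1 : q ≠ 1 := by rintro rfl; exact h₁ hq
      have h2 : q ≠ 2 := by rintro rfl; exact Fin.not_lt_zero _ (hq ▸ h₂)
      simp only [ne_eq, Fin.ext_iff, Fin.val_zero, Fin.val_one, Fin.val_two] at h0 h1 h2
      rw [Fin.lt_def, Fin.val_two]
      omega
    exact hπ ⟨1, 2, q, Fin.lt_def.2 (by rw [Fin.val_one, Fin.val_two]; omega), h2q,
      hq ▸ Fin.pos_iff_ne_zero.2 h₁, h₂⟩
  · have h01 : (0 : Fin (m + 3)) ≠ 1 := by rw [Ne, Fin.ext_iff, Fin.val_zero, Fin.val_one]; omega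
    have h21 : (2 : Fin (m + 3)) ≠ 1 := by rw [Ne, Fin.ext_iff, Fin.val_two, Fin.val_one]; omega
    rw [h₁]
    exact ⟨Fin.pos_iff_ne_zero.2 ((π.injective.ne h01).trans_eq h₁),
      Fin.pos_iff_ne_zero.2 ((π.injective.ne h21).trans_eq h₁)⟩

end Av231

theorem count_av231_initial_valley (n : ℕ) (hn : 3 ≤ n) :
    Nat.card {π : Equiv.Perm (Fin n) // Avoids231 ⇑π ∧
        π ⟨1, by omega⟩ < π ⟨0, by omega⟩ ∧ π ⟨1, by omega⟩ < π ⟨2, by omega⟩} =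
      Nat.choose (2 * (n - 1)) (n - 1) / n := by
  obtain ⟨m, rfl⟩ : ∃ m, n = m + 3 := ⟨n - 3, by omega⟩
  refine (Nat.card_congr (subtypeEquivRight fun π =>
    and_congr_right Av231.initial_valley_iff)).trans ?_
  rw [Nat.card_congr (Av231.minAtOneEquiv _), Av231.card_eq_catalan, catalan_eq_centralBinom_div,
    Nat.centralBinom_eq_two_mul_choose]
  rfl
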